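/- arXiv:2307.07067 — 3 statements merged into one kernel-verified Lean document; each statement's English description precedes it below -/
import Mathlib

section
/- Let r > 1 and let f be a complex-valued function that is continuous on the closed Bernstein ellipse B_r and complex-differentiable on an open set containing B_r. Then for every nonnegative integer ℓ there exists a polynomial p_ℓ of degree at most ℓ such that max_{x ∈ [−1,1]} |f(x) − p_ℓ(x)| ≤ 2·(sup_{z ∈ B_r} |f(z)|)·r^{−ℓ}/(r − 1). -/
/-!
Put `F z = f ((z + z⁻¹) / 2)`; the Joukowski map sends the closed annulus `r⁻¹ ≤ ‖z‖ ≤ r` onto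
`B_r`, so `F` is holomorphic near that annulus and bounded there by `M = sup_{B_r} ‖f‖`.
The Fourier coefficients `c k` of `θ ↦ f (cos θ) = F (exp (θ I))` are the Laurent coefficients of
`F`, and moving the contour to `‖z‖ = r` or `‖z‖ = r⁻¹` gives `‖c k‖ ≤ M r^(-|k|)`. As
`F z⁻¹ = F z`, `c (-k) = c k`, so the absolutely convergent Fourier series of `f ∘ cos` is the
Chebyshev series `f x = c 0 + ∑_{n ≥ 1} 2 c n T_n x` on `[-1, 1]`. Truncating it at degree `ℓ`
leaves a tail of norm at most `∑_{n > ℓ} 2 M r^(-n) = 2 M r^(-ℓ) / (r - 1)`.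
-/

/-- The closed Bernstein ellipse `B_r ⊆ ℂ`: the image of the closed annulus
`{z : 1 ≤ |z| ≤ r}` under the Joukowski map `z ↦ (z + z⁻¹)/2`. -/
def bernsteinEllipse (r : ℝ) : Set ℂ :=
  (fun z : ℂ => (z + z⁻¹) / 2) '' {z : ℂ | 1 ≤ ‖z‖ ∧ ‖z‖ ≤ r}

open Complex Metric Set Polynomial MeasureTheory
open scoped Real

local instance : Fact (0 < 2 * π) := ⟨Real.two_pi_pos⟩

theorem fourierCoeff_neg_of_even {T : ℝ} [Fact (0 < T)] {E : Type*} [NormedAddCommGroup E]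
    [NormedSpace ℂ E] {H : AddCircle T → E} (hH : ∀ t, H (-t) = H t) (k : ℤ) :
    fourierCoeff H (-k) = fourierCoeff H k := by
  rw [fourierCoeff, fourierCoeff, ← integral_neg_eq_self]
  congr 1 with t
  rw [hH, fourier_apply, fourier_apply, smul_neg, neg_smul, neg_neg]

theorem norm_sub_sum_range_le_of_le_geometric {E : Type*} [NormedAddCommGroup E] {a : ℕ → E}
    {s : E} (h : HasSum a s) {C q : ℝ} (hq : q < 1) (ha : ∀ n, ‖a n‖ ≤ C * q ^ n) (m : ℕ) :
    ‖s - ∑ n ∈ Finset.range m, a n‖ ≤ C * q ^ m / (1 - q) := by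
  rw [← dist_eq_norm, dist_comm]
  refine dist_le_of_le_geometric_of_tendsto q C hq (fun n => ?_) h.tendsto_sum_nat m
  rw [dist_eq_norm, Finset.sum_range_succ, sub_add_cancel_left, norm_neg]
  exact ha n

theorem circleIntegral_eq_of_differentiableAt {F : ℂ → ℂ} {s t : ℝ} (hs : 0 < s) (ht : 0 < t)
    (hF : ∀ z, ‖z‖ ∈ uIcc s t → DifferentiableAt ℂ F z) :
    (∮ z in C(0, s), F z) = ∮ z in C(0, t), F z := by
  wlog hst : s ≤ t generalizing s t
  · exact (this ht hs (by rwa [uIcc_comm]) (le_of_not_ge hst)).symm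
  rw [uIcc_of_le hst] at hF
  refine (circleIntegral_eq_of_differentiable_on_annulus_off_countable hs hst countable_empty
    (fun z hz => ?_) fun z hz => ?_).symm
  · simp only [mem_sdiff, mem_closedBall_zero_iff, mem_ball_zero_iff, not_lt] at hz
    exact (hF z ⟨hz.2, hz.1⟩).continuousAt.continuousWithinAt
  · simp only [sdiff_empty, mem_sdiff, mem_ball_zero_iff, mem_closedBall_zero_iff, not_le] at hz
    exact hF z ⟨hz.2.le, hz.1.le⟩

noncomputable def onUnitCircle (F : ℂ → ℂ) (t : AddCircle (2 * π)) : ℂ :=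
  F (AddCircle.toCircle t)

theorem onUnitCircle_coe (F : ℂ → ℂ) (θ : ℝ) : onUnitCircle F θ = F (exp (θ * I)) := by
  rw [onUnitCircle, AddCircle.toCircle_apply_mk, div_self Real.two_pi_pos.ne', one_mul,
    Circle.coe_exp]

theorem onUnitCircle_neg {F : ℂ → ℂ} (hF : ∀ z, F z⁻¹ = F z) (t : AddCircle (2 * π)) :
    onUnitCircle F (-t) = onUnitCircle F t := by
  rw [onUnitCircle, onUnitCircle, AddCircle.toCircle_neg, Circle.coe_inv, hF]

theorem continuous_onUnitCircle {F : ℂ → ℂ} (hF : ContinuousOn F (sphere 0 1)) :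
    Continuous (onUnitCircle F) :=
  hF.comp_continuous (continuous_subtype_val.comp AddCircle.continuous_toCircle)
    fun t => by simp [Circle.norm_coe]

theorem fourier_coe_eq_exp (k : ℤ) (θ : ℝ) :
    fourier k (θ : AddCircle (2 * π)) = exp (k * θ * I) := by
  rw [fourier_coe_apply]
  congr 1
  field_simp
  push_cast
  ring

theorem two_pi_I_mul_fourierCoeff_onUnitCircle (F : ℂ → ℂ) (k : ℤ) :
    2 * π * I * fourierCoeff (onUnitCircle F) k = ∮ z in C(0, 1), z ^ (-k - 1) * F z := by
  rw [fourierCoeff_eq_intervalIntegral _ k 0, zero_add, circleIntegral, real_smul,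
    ← mul_assoc, ofReal_div, ofReal_one, ofReal_mul, ofReal_ofNat]
  rw [show 2 * (π : ℂ) * I * (1 / (2 * π)) = I by field_simp, ← intervalIntegral.integral_const_mul]
  refine intervalIntegral.integral_congr fun θ _ => ?_
  simp only [deriv_circleMap, circleMap_zero, ofReal_one, one_mul, smul_eq_mul, onUnitCircle_coe,
    fourier_coe_eq_exp]
  have h : cexp (θ * I) * cexp (θ * I) ^ (-k - 1) = cexp (↑(-k) * θ * I) := by
    rw [← exp_int_mul, ← exp_add]
    push_cast
    ring_nf
  linear_combination (I * F (cexp (θ * I))) * h.symm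

theorem norm_fourierCoeff_onUnitCircle_le {F : ℂ → ℂ} {s M : ℝ} (hs : 0 < s)
    (hF : ∀ z, ‖z‖ ∈ uIcc 1 s → DifferentiableAt ℂ F z) (hM : ∀ z, ‖z‖ = s → ‖F z‖ ≤ M)
    (k : ℤ) : ‖fourierCoeff (onUnitCircle F) k‖ ≤ M * s ^ (-k) := by
  have hG : ∀ z : ℂ, ‖z‖ ∈ uIcc 1 s → DifferentiableAt ℂ (fun z => z ^ (-k - 1) * F z) z := by
    intro z hz
    have hz0 : z ≠ 0 := norm_pos_iff.mp <| lt_of_lt_of_le (lt_min one_pos hs) hz.1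
    exact (differentiableAt_zpow.mpr (Or.inl hz0)).mul (hF z hz)
  have hint := two_pi_I_mul_fourierCoeff_onUnitCircle F k
  rw [circleIntegral_eq_of_differentiableAt one_pos hs hG] at hint
  have hbound : ‖∮ z in C(0, s), z ^ (-k - 1) * F z‖ ≤ 2 * π * s * (s ^ (-k - 1) * M) := by
    refine circleIntegral.norm_integral_le_of_norm_le_const hs.le fun z hz => ?_
    rw [mem_sphere_zero_iff_norm] at hz
    rw [norm_mul, norm_zpow, hz]
    exact mul_le_mul_of_nonneg_left (hM z hz) (zpow_nonneg hs.le _)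
  have hs_pow : s * s ^ (-k - 1) = s ^ (-k) := by
    rw [mul_comm, ← zpow_add_one₀ hs.ne', sub_add_cancel]
  have h2πI : ‖(2 * π * I : ℂ)‖ = 2 * π := by simp [Real.pi_pos.le]
  refine le_of_mul_le_mul_left ?_ Real.two_pi_pos
  calc 2 * π * ‖fourierCoeff (onUnitCircle F) k‖ = ‖∮ z in C(0, s), z ^ (-k - 1) * F z‖ := by
        rw [← hint, norm_mul, h2πI]
    _ ≤ 2 * π * s * (s ^ (-k - 1) * M) := hbound
    _ = 2 * π * (M * s ^ (-k)) := by rw [← hs_pow]; ring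

theorem norm_fourierCoeff_onUnitCircle_le_of_annulus {F : ℂ → ℂ} {r M : ℝ} (hr : 1 ≤ r)
    (hF : ∀ z, r⁻¹ ≤ ‖z‖ → ‖z‖ ≤ r → DifferentiableAt ℂ F z)
    (hM : ∀ z, r⁻¹ ≤ ‖z‖ → ‖z‖ ≤ r → ‖F z‖ ≤ M) (k : ℤ) :
    ‖fourierCoeff (onUnitCircle F) k‖ ≤ M * r⁻¹ ^ k.natAbs := by
  have hr0 : 0 < r := one_pos.trans_le hr
  have hr' : r⁻¹ ≤ 1 := inv_le_one_of_one_le₀ hr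
  have hrr : r⁻¹ ≤ r := hr'.trans hr
  obtain ⟨n, rfl | rfl⟩ := Int.eq_nat_or_neg k
  · have h := norm_fourierCoeff_onUnitCircle_le hr0
      (fun z hz => hF z (hr'.trans (uIcc_of_le hr ▸ hz).1) (uIcc_of_le hr ▸ hz).2)
      (fun z hz => hM z (hz ▸ hrr) hz.le) n
    rwa [zpow_neg, zpow_natCast, ← inv_pow] at h
  · have h := norm_fourierCoeff_onUnitCircle_le (inv_pos.mpr hr0)
      (fun z hz => hF z (uIcc_of_ge hr' ▸ hz).1 ((uIcc_of_ge hr' ▸ hz).2.trans hr))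
      (fun z hz => hM z hz.ge (hz ▸ hrr)) (-n)
    simpa using h

theorem hasSum_two_mul_cos_of_even {c : ℤ → ℂ} (hc : ∀ k, c (-k) = c k) {θ : ℝ} {s : ℂ}
    (h : HasSum (fun k => c k • fourier k (θ : AddCircle (2 * π))) s) :
    HasSum (fun n : ℕ => 2 * c n * cos (n * θ)) (s + c 0) := by
  convert h.nat_add_neg using 1
  · ext n
    simp only [smul_eq_mul, fourier_coe_eq_exp, hc, cos]
    push_cast
    ring_nf
  · simp

/-- Degree-`ℓ` Chebyshev truncation of `g` when `c` are the Fourier coefficients of `g ∘ cos`;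
the even series `∑ₙ 2 c n cos (n θ)` counts `c 0` twice. -/
noncomputable def chebyshevTruncation (c : ℤ → ℂ) (ℓ : ℕ) : ℂ[X] :=
  ∑ n ∈ Finset.range (ℓ + 1), C (2 * c n) * Chebyshev.T ℂ n - C (c 0)

theorem natDegree_chebyshevTruncation_le (c : ℤ → ℂ) (ℓ : ℕ) :
    (chebyshevTruncation c ℓ).natDegree ≤ ℓ := by
  refine (natDegree_sub_le _ _).trans (max_le ?_ (by simp))
  refine natDegree_sum_le_of_forall_le _ _ fun n hn => (natDegree_C_mul_le _ _).trans ?_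
  rw [Chebyshev.natDegree_T, Int.natAbs_natCast]
  exact Nat.lt_succ_iff.mp (Finset.mem_range.mp hn)

theorem eval_cos_chebyshevTruncation (c : ℤ → ℂ) (ℓ : ℕ) (θ : ℂ) :
    (chebyshevTruncation c ℓ).eval (cos θ) =
      ∑ n ∈ Finset.range (ℓ + 1), 2 * c n * cos (n * θ) - c 0 := by
  simp [chebyshevTruncation, eval_finsetSum, Chebyshev.T_complex_cos]

theorem norm_sub_eval_cos_chebyshevTruncation_le (H : C(AddCircle (2 * π), ℂ))
    (heven : ∀ k, fourierCoeff H (-k) = fourierCoeff H k) {A q : ℝ} (hq₀ : 0 ≤ q) (hq : q < 1)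
    (hc : ∀ k, ‖fourierCoeff H k‖ ≤ A * q ^ k.natAbs) (ℓ : ℕ) (θ : ℝ) :
    ‖H θ - (chebyshevTruncation (fourierCoeff H) ℓ).eval (cos θ)‖ ≤
      2 * A * q ^ (ℓ + 1) / (1 - q) := by
  have hgeom := (summable_geometric_of_lt_one hq₀ hq).mul_left A
  have hsum : Summable (fourierCoeff H) :=
    .of_nat_of_neg (.of_norm_bounded hgeom fun n => by simpa using hc n)
      (.of_norm_bounded hgeom fun n => by simpa using hc (-n))
  have hexp :=
    hasSum_two_mul_cos_of_even heven (has_pointwise_sum_fourier_series_of_summable hsum θ)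
  rw [eval_cos_chebyshevTruncation, sub_sub_eq_add_sub]
  refine norm_sub_sum_range_le_of_le_geometric hexp hq (fun n => ?_) (ℓ + 1)
  rw [norm_mul, norm_mul, ← ofReal_natCast, ← ofReal_mul, ← ofReal_cos, norm_real,
    Real.norm_eq_abs, Complex.norm_two]
  have hcn : ‖fourierCoeff H n‖ ≤ A * q ^ n := by simpa using hc n
  have hcos := Real.abs_cos_le_one (n * θ)
  nlinarith [norm_nonneg (fourierCoeff H n), abs_nonneg (Real.cos (n * θ))]

noncomputable def joukowski (z : ℂ) : ℂ := (z + z⁻¹) / 2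

theorem joukowski_inv (z : ℂ) : joukowski z⁻¹ = joukowski z := by
  rw [joukowski, joukowski, inv_inv, add_comm]

theorem joukowski_exp_mul_I (θ : ℂ) : joukowski (exp (θ * I)) = cos θ := by
  rw [joukowski, ← exp_neg, cos, neg_mul]

theorem joukowski_mem_bernsteinEllipse {r : ℝ} (hr : 0 < r) {z : ℂ} (h₁ : r⁻¹ ≤ ‖z‖)
    (h₂ : ‖z‖ ≤ r) : joukowski z ∈ bernsteinEllipse r := by
  rcases le_or_gt 1 ‖z‖ with h | h
  · exact ⟨z, ⟨h, h₂⟩, rfl⟩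
  · refine ⟨z⁻¹, ⟨?_, ?_⟩, joukowski_inv z⟩
    · rw [norm_inv]
      exact one_le_inv_iff₀.mpr ⟨(inv_pos.mpr hr).trans_le h₁, h.le⟩
    · rw [norm_inv]
      exact inv_le_of_inv_le₀ hr h₁

theorem isCompact_bernsteinEllipse (r : ℝ) : IsCompact (bernsteinEllipse r) := by
  have hK : IsCompact {z : ℂ | 1 ≤ ‖z‖ ∧ ‖z‖ ≤ r} :=
    (isCompact_closedBall 0 r).of_isClosed_subset
      ((isClosed_le continuous_const continuous_norm).inter
        (isClosed_le continuous_norm continuous_const))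
      fun z hz => mem_closedBall_zero_iff.mpr hz.2
  refine hK.image_of_continuousOn fun z hz => ?_
  have hz : z ≠ 0 := norm_pos_iff.mp (one_pos.trans_le hz.1)
  exact ((continuousAt_id.add (continuousAt_inv₀ hz)).div_const 2).continuousWithinAt

theorem differentiableAt_comp_joukowski {f : ℂ → ℂ} {U : Set ℂ} (hU : IsOpen U)
    (hf : DifferentiableOn ℂ f U) {z : ℂ} (hz : z ≠ 0) (hzU : joukowski z ∈ U) :
    DifferentiableAt ℂ (fun w => f (joukowski w)) z :=
  (hf.differentiableAt (hU.mem_nhds hzU)).comp z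
    ((differentiableAt_id.add (differentiableAt_inv hz)).div_const 2)

theorem norm_sub_eval_cos_chebyshevTruncation_comp_joukowski_le {f : ℂ → ℂ} {U : Set ℂ}
    {r M : ℝ} (hr : 1 < r) (hU : IsOpen U) (hBU : bernsteinEllipse r ⊆ U)
    (hf : DifferentiableOn ℂ f U) (hM : ∀ w ∈ bernsteinEllipse r, ‖f w‖ ≤ M) (ℓ : ℕ) (θ : ℝ) :
    ‖f (cos θ) - (chebyshevTruncation (fourierCoeff (onUnitCircle (f ∘ joukowski))) ℓ).eval
      (cos θ)‖ ≤ 2 * M * r⁻¹ ^ (ℓ + 1) / (1 - r⁻¹) := by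
  have hr0 : 0 < r := one_pos.trans hr
  have hJ : ∀ z : ℂ, r⁻¹ ≤ ‖z‖ → ‖z‖ ≤ r → joukowski z ∈ bernsteinEllipse r :=
    fun z => joukowski_mem_bernsteinEllipse hr0
  have hFd : ∀ z : ℂ, r⁻¹ ≤ ‖z‖ → ‖z‖ ≤ r → DifferentiableAt ℂ (f ∘ joukowski) z :=
    fun z h₁ h₂ => differentiableAt_comp_joukowski hU hf
      (norm_pos_iff.mp ((inv_pos.mpr hr0).trans_le h₁)) (hBU (hJ z h₁ h₂))
  have hcont : ContinuousOn (f ∘ joukowski) (sphere 0 1) := fun z hz => by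
    rw [mem_sphere_zero_iff_norm] at hz
    exact (hFd z (hz ▸ inv_le_one_of_one_le₀ hr.le) (hz ▸ hr.le)).continuousAt.continuousWithinAt
  have h := norm_sub_eval_cos_chebyshevTruncation_le ⟨_, continuous_onUnitCircle hcont⟩
    (fourierCoeff_neg_of_even (onUnitCircle_neg (F := f ∘ joukowski) fun z =>
      congrArg f (joukowski_inv z)))
    (inv_nonneg.mpr hr0.le) (inv_lt_one_of_one_lt₀ hr)
    (norm_fourierCoeff_onUnitCircle_le_of_annulus hr.le hFd fun z h₁ h₂ => hM _ (hJ z h₁ h₂)) ℓ θ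
  rwa [ContinuousMap.coe_mk, onUnitCircle_coe, Function.comp_apply, joukowski_exp_mul_I] at h

theorem bernstein_polynomial_approximation_general (r : ℝ) (hr : 1 < r) (f : ℂ → ℂ)
    (U : Set ℂ) (hU : IsOpen U) (hBU : bernsteinEllipse r ⊆ U)
    (hf_diff : DifferentiableOn ℂ f U) :
    ∀ ℓ : ℕ, ∃ p : Polynomial ℂ, p.natDegree ≤ ℓ ∧
      ∀ x : ℝ, x ∈ Set.Icc (-1 : ℝ) 1 →
        ‖f x - p.eval (x : ℂ)‖ ≤
          2 * (sSup ((fun z => ‖f z‖) '' bernsteinEllipse r)) *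
            r ^ (-(ℓ : ℤ)) / (r - 1) := by
  intro ℓ
  refine ⟨chebyshevTruncation (fourierCoeff (onUnitCircle (f ∘ joukowski))) ℓ,
    natDegree_chebyshevTruncation_le _ ℓ, fun x hx => ?_⟩
  have hM : ∀ w ∈ bernsteinEllipse r, ‖f w‖ ≤ sSup ((fun z => ‖f z‖) '' bernsteinEllipse r) :=
    fun w hw => le_csSup ((isCompact_bernsteinEllipse r).bddAbove_image
      (hf_diff.continuousOn.mono hBU).norm) ⟨w, hw, rfl⟩
  have hx : (x : ℂ) = cos (Real.arccos x : ℝ) := by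
    rw [← ofReal_cos, Real.cos_arccos hx.1 hx.2]
  rw [hx]
  refine (norm_sub_eval_cos_chebyshevTruncation_comp_joukowski_le hr hU hBU hf_diff hM ℓ _).trans
    (le_of_eq ?_)
  have h1r : 1 - r⁻¹ = (r - 1) / r := by field_simp
  rw [zpow_neg, zpow_natCast, ← inv_pow, pow_succ, h1r]
  field_simp

/-- Trefethen, Theorem 8.2: if `f` is continuous on the closed Bernstein ellipse `B_r`
(`r > 1`) and complex-differentiable on an open set containing it, then for every `ℓ`
there is a polynomial `p_ℓ` of degree at most `ℓ` with
`max_{x ∈ [−1,1]} |f(x) − p_ℓ(x)| ≤ 2 (sup_{z ∈ B_r} |f(z)|) r^{−ℓ}/(r−1)`. -/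
theorem bernstein_polynomial_approximation (r : ℝ) (hr : 1 < r) (f : ℂ → ℂ)
    (hf_cont : ContinuousOn f (bernsteinEllipse r))
    (U : Set ℂ) (hU : IsOpen U) (hBU : bernsteinEllipse r ⊆ U)
    (hf_diff : DifferentiableOn ℂ f U) :
    ∀ ℓ : ℕ, ∃ p : Polynomial ℂ, p.natDegree ≤ ℓ ∧
      ∀ x : ℝ, x ∈ Set.Icc (-1 : ℝ) 1 →
        ‖f x - p.eval (x : ℂ)‖ ≤
          2 * (sSup ((fun z => ‖f z‖) '' bernsteinEllipse r)) *
            r ^ (-(ℓ : ℤ)) / (r - 1) :=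
  bernstein_polynomial_approximation_general r hr f U hU hBU hf_diff
end

section
/- Let F : ℝ^N → ℝ^N be continuously differentiable in a neighborhood of a point n* with F(n*) = n*, and suppose that every eigenvalue (over ℂ) of the Jacobian matrix J = DF(n*) has real part strictly less than 1. Then there exist a damping parameter a ∈ (0,1], a real symmetric positive-definite matrix W ∈ ℝ^{N×N}, a constant c ∈ (0,1), and a radius γ > 0 such that, writing ‖x‖_W = √(xᵀ W x), the damped map F̃(n) = (1−a)·n + a·F(n) satisfies ‖F̃(n₁) − F̃(n₂)‖_W ≤ c·‖n₁ − n₂‖_W for all n₁, n₂ in the ball {n ∈ ℝ^N : ‖n − n*‖_W ≤ γ}. -/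
/-!
Damping by `a` sends each eigenvalue `μ` of `J = DF(n*)` to `1 - a (1 - μ)`. The spectrum is
compact and lies in `Re μ < 1`, so for small `a > 0` all of these lie in the open unit disc:
the damped Jacobian `M = (1 - a) 1 + a J` has spectral radius `< 1`. By Gelfand's formula
`∑ ‖Mᵏ‖²` converges, and `W = ∑ (Mᵏ)ᵀ Mᵏ` solves the discrete Lyapunov equation
`Mᵀ W M = W - 1`. Since `xᵀ W x ≤ K ‖x‖²` with `K = 1 + ∑ ‖Mᵏ‖²`, this gives
`‖M x‖_W² ≤ (1 - 1/K) ‖x‖_W²`. Finally, `F` is strictly differentiable at `n*`, so near `n*`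
the damped map differs from `M` by a map of arbitrarily small Lipschitz constant.
-/

open Matrix Filter
open scoped NNReal ENNReal

lemma Complex.norm_one_sub_mul_sq_le {w : ℂ} {t δ R : ℝ} (ht : 0 ≤ t) (hδ : δ ≤ w.re) (hR : ‖w‖ ≤ R)
    (htR : t * R ^ 2 ≤ δ) : ‖1 - t * w‖ ^ 2 ≤ 1 - t * δ := by
  have hw : w.re * w.re + w.im * w.im ≤ R ^ 2 := by
    rw [← Complex.normSq_apply, ← Complex.sq_norm]
    exact pow_le_pow_left₀ (norm_nonneg w) hR 2
  rw [Complex.sq_norm, Complex.normSq_apply]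
  simp only [Complex.sub_re, Complex.one_re, Complex.mul_re, Complex.ofReal_re,
    Complex.ofReal_im, Complex.sub_im, Complex.one_im, Complex.mul_im]
  nlinarith [mul_le_mul_of_nonneg_left hw (mul_nonneg ht ht), mul_le_mul_of_nonneg_left hδ ht]

section Damping

variable {A : Type*} [NormedRing A] [NormedAlgebra ℂ A] [CompleteSpace A]

lemma spectrum.exists_pos_le_one_sub_re {a : A} (h : ∀ μ ∈ spectrum ℂ a, μ.re < 1) :
    ∃ δ > 0, ∀ μ ∈ spectrum ℂ a, δ ≤ 1 - μ.re := by
  rcases (spectrum ℂ a).eq_empty_or_nonempty with hσ | hσ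
  · exact ⟨1, one_pos, by simp [hσ]⟩
  obtain ⟨μ₀, hμ₀, hmax⟩ :=
    (spectrum.isCompact a).exists_isMaxOn hσ Complex.continuous_re.continuousOn
  exact ⟨1 - μ₀.re, by linarith [h μ₀ hμ₀], fun μ hμ => by linarith [isMaxOn_iff.mp hmax μ hμ]⟩

lemma spectrum.damped_eq_image {𝕜 R : Type*} [Field 𝕜] [Ring R] [Algebra 𝕜 R] (a : R) {t : 𝕜}
    (ht : t ≠ 0) :
    spectrum 𝕜 (algebraMap 𝕜 R (1 - t) + t • a) = (fun μ => 1 - t * (1 - μ)) '' spectrum 𝕜 a := by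
  rw [← spectrum.singleton_add_eq, show t • a = (Units.mk0 t ht) • a from rfl,
    spectrum.unit_smul_eq_smul, Set.singleton_add, ← Set.image_smul, Set.image_image]
  congr 1
  funext μ
  simp only [Units.smul_mk0, smul_eq_mul]
  ring

theorem spectrum.exists_spectralRadius_damped_lt_one {a : A} (h : ∀ μ ∈ spectrum ℂ a, μ.re < 1) :
    ∃ t : ℝ, 0 < t ∧ t ≤ 1 ∧ spectralRadius ℂ (algebraMap ℂ A (1 - t) + (t : ℂ) • a) < 1 := by
  obtain ⟨δ, hδ, hgap⟩ := spectrum.exists_pos_le_one_sub_re h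
  set R := 1 + ‖a‖ * ‖(1 : A)‖
  have hR : 0 < R := by positivity
  have hbound : ∀ μ ∈ spectrum ℂ a, ‖1 - μ‖ ≤ R := fun μ hμ =>
    (norm_sub_le _ _).trans (by simpa [R] using spectrum.norm_le_norm_mul_of_mem hμ)
  set t := min 1 (δ / R ^ 2)
  have ht : 0 < t := lt_min one_pos (by positivity)
  have htR : t * R ^ 2 ≤ δ := by
    calc t * R ^ 2 ≤ δ / R ^ 2 * R ^ 2 := by gcongr; exact min_le_right _ _
      _ = δ := by field_simp
  refine ⟨t, ht, min_le_left _ _, ?_⟩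
  have hlt : √(1 - t * δ) < 1 := by
    rw [Real.sqrt_lt' one_pos]; nlinarith
  refine lt_of_le_of_lt ?_ (ENNReal.ofReal_lt_one.mpr hlt)
  rw [spectralRadius, spectrum.damped_eq_image a (by exact_mod_cast ht.ne')]
  refine iSup₂_le fun ν hν => ?_
  obtain ⟨μ, hμ, rfl⟩ := hν
  rw [← enorm_eq_nnnorm, ← ofReal_norm]
  refine ENNReal.ofReal_le_ofReal (Real.le_sqrt_of_sq_le ?_)
  exact Complex.norm_one_sub_mul_sq_le ht.le (by simpa using hgap μ hμ) (hbound μ hμ) htR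

end Damping

theorem spectrum.eventually_norm_pow_le_of_spectralRadius_lt {A : Type*} [NormedRing A]
    [NormedAlgebra ℂ A] [CompleteSpace A] {a : A} {r : ℝ≥0} (h : spectralRadius ℂ a < r) :
    ∀ᶠ k : ℕ in atTop, ‖a ^ k‖ ≤ r ^ k := by
  filter_upwards [(pow_nnnorm_pow_one_div_tendsto_nhds_spectralRadius a).eventually_lt_const h,
    eventually_ne_atTop 0] with k hk hk0
  have : (‖a ^ k‖₊ : ℝ≥0∞) ≤ r ^ k := by
    calc (‖a ^ k‖₊ : ℝ≥0∞) = ((‖a ^ k‖₊ : ℝ≥0∞) ^ (1 / k : ℝ)) ^ k := by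
          rw [one_div, ENNReal.rpow_inv_natCast_pow hk0]
      _ ≤ r ^ k := pow_le_pow_left' hk.le k
  exact_mod_cast this

lemma EuclideanSpace.norm_toLp_eq_sqrt_dotProduct {n : Type*} [Fintype n] (v : n → ℝ) :
    ‖(WithLp.toLp 2 v : EuclideanSpace ℝ n)‖ = √(v ⬝ᵥ v) := by
  simp [EuclideanSpace.norm_eq, dotProduct, sq]

namespace Matrix

lemma dotProduct_transpose_mul_mulVec {m n : Type*} [Fintype m] [Fintype n] (B : Matrix m n ℝ)
    (x : n → ℝ) :
    x ⬝ᵥ (Bᵀ * B) *ᵥ x = (B *ᵥ x) ⬝ᵥ (B *ᵥ x) := by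
  rw [← mulVec_mulVec, dotProduct_mulVec, vecMul_transpose]

lemma map_ofReal_damped {n : Type*} [Fintype n] [DecidableEq n] (A : Matrix n n ℝ) (a : ℝ) :
    ((1 - a) • (1 : Matrix n n ℝ) + a • A).map ((↑) : ℝ → ℂ) =
      algebraMap ℂ (Matrix n n ℂ) (1 - a) + (a : ℂ) • A.map (↑) := by
  ext i j
  by_cases h : i = j <;> simp [h, algebraMap_matrix_apply]

section Frobenius

attribute [local instance] frobeniusNormedAddCommGroup frobeniusNormedRing
  frobeniusNormedAlgebra

variable {m n : Type*} [Fintype m] [Fintype n]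

lemma frobenius_norm_sq (B : Matrix m n ℝ) : ‖B‖ ^ 2 = ∑ i, ∑ j, B i j ^ 2 := by
  rw [frobenius_norm_def, ← Real.rpow_natCast, ← Real.rpow_mul (by positivity)]
  norm_num

lemma dotProduct_mulVec_self_le (B : Matrix m n ℝ) (x : n → ℝ) :
    (B *ᵥ x) ⬝ᵥ (B *ᵥ x) ≤ ‖B‖ ^ 2 * (x ⬝ᵥ x) := by
  simp only [frobenius_norm_sq, dotProduct, mulVec, ← sq]
  rw [Finset.sum_mul]
  exact Finset.sum_le_sum fun i _ => Finset.sum_mul_sq_le_sq_mul_sq _ _ _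

variable [DecidableEq n]

noncomputable def lyapunovMatrix (M : Matrix n n ℝ) : Matrix n n ℝ := ∑' k, (M ^ k)ᵀ * M ^ k

variable {M : Matrix n n ℝ}

lemma hasSum_lyapunovMatrix (hM : Summable fun k => ‖M ^ k‖ ^ 2) :
    HasSum (fun k => (M ^ k)ᵀ * M ^ k) M.lyapunovMatrix := by
  refine (Summable.of_norm_bounded hM fun k => ?_).hasSum
  calc ‖(M ^ k)ᵀ * M ^ k‖ ≤ ‖(M ^ k)ᵀ‖ * ‖M ^ k‖ := frobenius_norm_mul _ _
    _ = ‖M ^ k‖ ^ 2 := by rw [frobenius_norm_transpose, sq]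

lemma hasSum_dotProduct_lyapunovMatrix_mulVec (hM : Summable fun k => ‖M ^ k‖ ^ 2)
    (x : n → ℝ) :
    HasSum (fun k => (M ^ k *ᵥ x) ⬝ᵥ (M ^ k *ᵥ x)) (x ⬝ᵥ M.lyapunovMatrix *ᵥ x) := by
  let q : Matrix n n ℝ →+ ℝ := AddMonoidHom.mk' (fun W => x ⬝ᵥ W *ᵥ x) fun W V => by
    simp [add_mulVec, dotProduct_add]
  have hq : Continuous q :=
    continuous_const.dotProduct (continuous_id.matrix_mulVec continuous_const)
  simpa only [Function.comp_def, q, AddMonoidHom.mk'_apply, dotProduct_transpose_mul_mulVec]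
    using (hasSum_lyapunovMatrix hM).map q hq

lemma isSymm_lyapunovMatrix (hM : Summable fun k => ‖M ^ k‖ ^ 2) : M.lyapunovMatrix.IsSymm := by
  refine (hasSum_lyapunovMatrix hM).matrix_transpose.unique ?_
  simpa only [transpose_mul, transpose_transpose] using hasSum_lyapunovMatrix hM

lemma dotProduct_self_le_lyapunovMatrix (hM : Summable fun k => ‖M ^ k‖ ^ 2) (x : n → ℝ) :
    x ⬝ᵥ x ≤ x ⬝ᵥ M.lyapunovMatrix *ᵥ x := by
  simpa using le_hasSum (hasSum_dotProduct_lyapunovMatrix_mulVec hM x) 0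
    fun _ _ => Finset.sum_nonneg fun _ _ => mul_self_nonneg _

lemma dotProduct_lyapunovMatrix_mulVec_le (hM : Summable fun k => ‖M ^ k‖ ^ 2) (x : n → ℝ) :
    x ⬝ᵥ M.lyapunovMatrix *ᵥ x ≤ (∑' k, ‖M ^ k‖ ^ 2) * (x ⬝ᵥ x) :=
  hasSum_le (fun _ => dotProduct_mulVec_self_le _ x)
    (hasSum_dotProduct_lyapunovMatrix_mulVec hM x) (hM.hasSum.mul_right _)

lemma dotProduct_lyapunovMatrix_mulVec_mulVec (hM : Summable fun k => ‖M ^ k‖ ^ 2)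
    (x : n → ℝ) :
    (M *ᵥ x) ⬝ᵥ M.lyapunovMatrix *ᵥ (M *ᵥ x) = x ⬝ᵥ M.lyapunovMatrix *ᵥ x - x ⬝ᵥ x := by
  refine (hasSum_dotProduct_lyapunovMatrix_mulVec hM (M *ᵥ x)).unique ?_
  have := (hasSum_nat_add_iff' 1).mpr (hasSum_dotProduct_lyapunovMatrix_mulVec hM x)
  simpa [mulVec_mulVec, pow_succ] using this

lemma posDef_lyapunovMatrix (hM : Summable fun k => ‖M ^ k‖ ^ 2) : M.lyapunovMatrix.PosDef := by
  refine .of_dotProduct_mulVec_pos ?_ fun x hx => ?_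
  · exact isHermitian_iff_isSymm.mpr (isSymm_lyapunovMatrix hM)
  · simpa using (dotProduct_star_self_pos_iff.mpr hx).trans_le
      (dotProduct_self_le_lyapunovMatrix hM x)

theorem exists_posDef_dotProduct_mulVec_mulVec_le (hM : Summable fun k => ‖M ^ k‖ ^ 2) :
    ∃ W : Matrix n n ℝ, W.IsSymm ∧ W.PosDef ∧ ∃ ρ, 0 ≤ ρ ∧ ρ < 1 ∧
      ∀ x, (M *ᵥ x) ⬝ᵥ W *ᵥ (M *ᵥ x) ≤ ρ * (x ⬝ᵥ W *ᵥ x) := by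
  set K := ∑' k, ‖M ^ k‖ ^ 2
  have hK₀ : 0 ≤ K := tsum_nonneg fun k => sq_nonneg _
  have hK : 0 < K + 1 := by linarith
  refine ⟨M.lyapunovMatrix, isSymm_lyapunovMatrix hM, posDef_lyapunovMatrix hM,
    1 - 1 / (K + 1), ?_, sub_lt_self _ (by positivity), fun x => ?_⟩
  · rw [sub_nonneg, div_le_one hK]
    linarith
  · set Q := x ⬝ᵥ M.lyapunovMatrix *ᵥ x
    have hQ : Q / (K + 1) ≤ x ⬝ᵥ x := by
      have hQK : Q ≤ K * (x ⬝ᵥ x) := dotProduct_lyapunovMatrix_mulVec_le hM x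
      have hx : 0 ≤ x ⬝ᵥ x := Finset.sum_nonneg fun i _ => mul_self_nonneg (x i)
      rw [div_le_iff₀ hK]
      nlinarith
    rw [dotProduct_lyapunovMatrix_mulVec_mulVec hM]
    linarith [show (1 - 1 / (K + 1)) * Q = Q - Q / (K + 1) by ring]

lemma summable_norm_pow_sq_of_spectralRadius_lt_one {M : Matrix n n ℝ}
    (h : spectralRadius ℂ (M.map ((↑) : ℝ → ℂ)) < 1) : Summable fun k => ‖M ^ k‖ ^ 2 := by
  obtain ⟨r, hρr, hr⟩ := ENNReal.lt_iff_exists_nnreal_btwn.mp h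
  have hr1 : (r : ℝ) < 1 := by exact_mod_cast hr
  refine Summable.of_norm_bounded_eventually_nat (g := fun k => ((r : ℝ) ^ 2) ^ k)
    (summable_geometric_of_lt_one (by positivity) (by nlinarith [r.2])) ?_
  filter_upwards [spectrum.eventually_norm_pow_le_of_spectralRadius_lt hρr] with k hk
  have hmap : (M ^ k).map ((↑) : ℝ → ℂ) = M.map (↑) ^ k :=
    Matrix.map_pow M Complex.ofRealHom k
  rw [← hmap, frobenius_norm_map_eq _ _ Complex.norm_real] at hk
  rw [norm_pow, norm_norm, ← pow_mul, mul_comm, pow_mul]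
  gcongr

theorem exists_damped_posDef_dotProduct_mulVec_mulVec_le (A : Matrix n n ℝ)
    (hA : ∀ μ ∈ spectrum ℂ (A.map ((↑) : ℝ → ℂ)), μ.re < 1) :
    ∃ a : ℝ, 0 < a ∧ a ≤ 1 ∧ ∃ W : Matrix n n ℝ, W.IsSymm ∧ W.PosDef ∧ ∃ ρ, 0 ≤ ρ ∧ ρ < 1 ∧
      ∀ x, (((1 - a) • 1 + a • A) *ᵥ x) ⬝ᵥ W *ᵥ (((1 - a) • 1 + a • A) *ᵥ x) ≤
        ρ * (x ⬝ᵥ W *ᵥ x) := by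
  obtain ⟨a, ha₀, ha₁, hρ⟩ := spectrum.exists_spectralRadius_damped_lt_one hA
  rw [← map_ofReal_damped] at hρ
  exact ⟨a, ha₀, ha₁, exists_posDef_dotProduct_mulVec_mulVec_le
    (summable_norm_pow_sq_of_spectralRadius_lt_one hρ)⟩

end Frobenius

open scoped MatrixOrder in
lemma PosSemidef.exists_transpose_mul_self_eq {n : Type*} [Fintype n] [DecidableEq n]
    {W : Matrix n n ℝ} (hW : W.PosSemidef) : ∃ B : Matrix n n ℝ, Bᵀ * B = W := by
  refine ⟨CFC.sqrt W, ?_⟩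
  rw [← conjTranspose_eq_transpose_of_trivial, (CFC.sqrt_nonneg W).posSemidef.1.eq,
    CFC.sqrt_mul_sqrt_self W hW.nonneg]

lemma PosDef.exists_injective_norm_eq_sqrt {n : Type*} [Fintype n] [DecidableEq n]
    {W : Matrix n n ℝ} (hW : W.PosDef) :
    ∃ S : (n → ℝ) →L[ℝ] EuclideanSpace ℝ n, Function.Injective S ∧
      ∀ v, ‖S v‖ = √(v ⬝ᵥ W *ᵥ v) := by
  obtain ⟨B, rfl⟩ := hW.posSemidef.exists_transpose_mul_self_eq
  let S : (n → ℝ) →L[ℝ] EuclideanSpace ℝ n :=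
    (EuclideanSpace.equiv n ℝ).symm.toContinuousLinearMap ∘L
      LinearMap.toContinuousLinearMap (toLin' B)
  have hS : ∀ v, ‖S v‖ = √(v ⬝ᵥ (Bᵀ * B) *ᵥ v) := fun v => by
    rw [dotProduct_transpose_mul_mulVec, ← EuclideanSpace.norm_toLp_eq_sqrt_dotProduct]
    rfl
  refine ⟨S, (injective_iff_map_eq_zero S).mpr fun v hv => ?_, hS⟩
  by_contra hv₀
  have hpos := hW.dotProduct_mulVec_pos hv₀
  rw [star_trivial, ← Real.sqrt_pos, ← hS, hv, norm_zero] at hpos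
  exact lt_irrefl _ hpos

end Matrix

theorem HasStrictFDerivAt.exists_norm_comp_sub_le {𝕜 E F : Type*} [NontriviallyNormedField 𝕜]
    [NormedAddCommGroup E] [NormedSpace 𝕜 E] [NormedAddCommGroup F] [NormedSpace 𝕜 F]
    {f : E → E} {L : E →L[𝕜] E} {x₀ : E} (hf : HasStrictFDerivAt f L x₀)
    {S : E →L[𝕜] F} {K : ℝ≥0} (hS : AntilipschitzWith K S) {c₀ c : ℝ}
    (hL : ∀ v, ‖S (L v)‖ ≤ c₀ * ‖S v‖) (hc : c₀ < c) :
    ∃ γ > 0, ∀ x y, ‖S (x - x₀)‖ ≤ γ → ‖S (y - x₀)‖ ≤ γ →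
      ‖S (f x - f y)‖ ≤ c * ‖S (x - y)‖ := by
  obtain ⟨ε, hε, hεc⟩ := exists_pos_mul_lt (sub_pos.mpr hc) (‖S‖ * K)
  lift ε to ℝ≥0 using hε.le
  have hg := hf.sub L.hasStrictFDerivAt
  rw [sub_self] at hg
  obtain ⟨s, hs, hlip⟩ := hg.exists_lipschitzOnWith_of_nnnorm_lt ε
    (by rw [nnnorm_zero]; exact_mod_cast hε)
  obtain ⟨β, hβ, hball⟩ := Metric.mem_nhds_iff.mp hs
  have hK : (0 : ℝ) < K + 1 := by positivity
  have hmem : ∀ z, ‖S (z - x₀)‖ ≤ β / (K + 1) → z ∈ s := fun z hz => hball <| by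
    rw [Metric.mem_ball, dist_eq_norm]
    calc ‖z - x₀‖ ≤ K * ‖S (z - x₀)‖ := ZeroHomClass.bound_of_antilipschitz S hS _
      _ ≤ K * (β / (K + 1)) := by gcongr
      _ < β := by rw [mul_div_assoc', div_lt_iff₀ hK]; linarith
  refine ⟨β / (K + 1), by positivity, fun x y hx hy => ?_⟩
  have hr : ‖(f x - L x) - (f y - L y)‖ ≤ ε * ‖x - y‖ := by
    simpa [dist_eq_norm] using hlip.dist_le_mul x (hmem x hx) y (hmem y hy)
  have hsplit : f x - f y = L (x - y) + ((f x - L x) - (f y - L y)) := by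
    rw [map_sub]; abel
  calc ‖S (f x - f y)‖ ≤ c₀ * ‖S (x - y)‖ + ‖S‖ * (ε * ‖x - y‖) := by
        rw [hsplit, map_add]
        exact norm_add_le_of_le (hL _) ((S.le_opNorm _).trans (by gcongr))
    _ ≤ c₀ * ‖S (x - y)‖ + ‖S‖ * (ε * (K * ‖S (x - y)‖)) := by
        gcongr; exact ZeroHomClass.bound_of_antilipschitz S hS _
    _ = (c₀ + ‖S‖ * K * ε) * ‖S (x - y)‖ := by ring
    _ ≤ c * ‖S (x - y)‖ := by gcongr; linarith

theorem damped_map_contraction_of_jacobian_general {N : ℕ} (F : (Fin N → ℝ) → (Fin N → ℝ))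
    (nstar : Fin N → ℝ)
    (U : Set (Fin N → ℝ)) (hU : IsOpen U) (hnU : nstar ∈ U)
    (hF : ContDiffOn ℝ 1 F U)
    (hspec : ∀ μ ∈ spectrum ℂ
      ((LinearMap.toMatrix' ((fderiv ℝ F nstar) : (Fin N → ℝ) →ₗ[ℝ] (Fin N → ℝ))).map
        (fun x : ℝ => (x : ℂ))), μ.re < 1) :
    ∃ (a : ℝ) (W : Matrix (Fin N) (Fin N) ℝ) (c γ : ℝ),
      0 < a ∧ a ≤ 1 ∧ W.IsSymm ∧ W.PosDef ∧ 0 < c ∧ c < 1 ∧ 0 < γ ∧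
      ∀ n₁ n₂ : Fin N → ℝ,
        Real.sqrt ((n₁ - nstar) ⬝ᵥ W.mulVec (n₁ - nstar)) ≤ γ →
        Real.sqrt ((n₂ - nstar) ⬝ᵥ W.mulVec (n₂ - nstar)) ≤ γ →
        Real.sqrt ((((1 - a) • n₁ + a • F n₁) - ((1 - a) • n₂ + a • F n₂)) ⬝ᵥ
            W.mulVec (((1 - a) • n₁ + a • F n₁) - ((1 - a) • n₂ + a • F n₂))) ≤
          c * Real.sqrt ((n₁ - n₂) ⬝ᵥ W.mulVec (n₁ - n₂)) := by
  set J := fderiv ℝ F nstar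
  obtain ⟨a, ha₀, ha₁, W, hWsymm, hWpos, ρ, hρ₀, hρ₁, hWM⟩ :=
    Matrix.exists_damped_posDef_dotProduct_mulVec_mulVec_le _ hspec
  obtain ⟨S, hSinj, hSW⟩ := hWpos.exists_injective_norm_eq_sqrt
  obtain ⟨K, -, hK⟩ := S.toLinearMap.injective_iff_antilipschitz.mp hSinj
  set L : (Fin N → ℝ) →L[ℝ] (Fin N → ℝ) := (1 - a) • ContinuousLinearMap.id ℝ _ + a • J
  have hJ : HasStrictFDerivAt F J nstar :=
    (hF.contDiffAt (hU.mem_nhds hnU)).hasStrictFDerivAt one_ne_zero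
  have hdamped : HasStrictFDerivAt (fun n => (1 - a) • n + a • F n) L nstar :=
    ((hasStrictFDerivAt_id nstar).const_smul (1 - a)).add (hJ.const_smul a)
  have hL : ∀ v, ‖S (L v)‖ ≤ √ρ * ‖S v‖ := fun v => by
    have hLv : L v = ((1 - a) • 1 + a • LinearMap.toMatrix' (J : (Fin N → ℝ) →ₗ[ℝ] _)) *ᵥ v := by
      simp [L, add_mulVec, smul_mulVec]
    rw [hLv, hSW, hSW, ← Real.sqrt_mul hρ₀]
    exact Real.sqrt_le_sqrt (hWM v)
  have hc : √ρ < (1 + √ρ) / 2 := by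
    linarith [(Real.sqrt_lt' one_pos).mpr (by linarith : ρ < 1 ^ 2)]
  obtain ⟨γ, hγ, hcontr⟩ := hdamped.exists_norm_comp_sub_le hK hL hc
  refine ⟨a, W, (1 + √ρ) / 2, γ, ha₀, ha₁, hWsymm, hWpos, by positivity, by linarith, hγ, ?_⟩
  simpa only [hSW] using hcontr

/-- If `F` is `C¹` near a fixed point `n*` and all complex eigenvalues of the Jacobian
`DF(n*)` have real part `< 1`, then there are `a ∈ (0,1]`, a symmetric positive-definite
`W`, `c ∈ (0,1)` and `γ > 0` such that the damped map `F̃(n) = (1−a) n + a F(n)` is a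
`c`-contraction in the `W`-weighted norm on the `γ`-ball around `n*`. -/
theorem damped_map_contraction_of_jacobian {N : ℕ} (F : (Fin N → ℝ) → (Fin N → ℝ))
    (nstar : Fin N → ℝ) (hfix : F nstar = nstar)
    (U : Set (Fin N → ℝ)) (hU : IsOpen U) (hnU : nstar ∈ U)
    (hF : ContDiffOn ℝ 1 F U)
    (hspec : ∀ μ ∈ spectrum ℂ
      ((LinearMap.toMatrix' ((fderiv ℝ F nstar) : (Fin N → ℝ) →ₗ[ℝ] (Fin N → ℝ))).map
        (fun x : ℝ => (x : ℂ))), μ.re < 1) :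
    ∃ (a : ℝ) (W : Matrix (Fin N) (Fin N) ℝ) (c γ : ℝ),
      0 < a ∧ a ≤ 1 ∧ W.IsSymm ∧ W.PosDef ∧ 0 < c ∧ c < 1 ∧ 0 < γ ∧
      ∀ n₁ n₂ : Fin N → ℝ,
        Real.sqrt ((n₁ - nstar) ⬝ᵥ W.mulVec (n₁ - nstar)) ≤ γ →
        Real.sqrt ((n₂ - nstar) ⬝ᵥ W.mulVec (n₂ - nstar)) ≤ γ →
        Real.sqrt ((((1 - a) • n₁ + a • F n₁) - ((1 - a) • n₂ + a • F n₂)) ⬝ᵥ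
            W.mulVec (((1 - a) • n₁ + a • F n₁) - ((1 - a) • n₂ + a • F n₂))) ≤
          c * Real.sqrt ((n₁ - n₂) ⬝ᵥ W.mulVec (n₁ - n₂)) :=
  damped_map_contraction_of_jacobian_general F nstar U hU hnU hF hspec
end

section
/- Fix N ≥ 1, a weight vector w ∈ ℝ^N with strictly positive entries, n* ∈ ℝ^N, γ > 0, a ∈ (0,1], c ∈ (0,1), and a map F̄ : ℝ^N → ℝ^N such that the damped map G(n) = (1−a)·n + a·F̄(n) satisfies ‖G(n) − n*‖_w ≤ c·‖n − n*‖_w for all n ∈ B_γ(n*). Let (Ω, ℱ, (ℱ_k)_{k≥0}, P) be a filtered probability space and (n_k)_{k≥0} an adapted ℝ^N-valued process with n_0 deterministic, n_0 ∈ B_γ(n*), and n_{k+1} = (1−a)·n_k + a·F̂_k, where each F̂_k : Ω → ℝ^N is ℱ_{k+1}-measurable with square-integrable components and, almost surely on the event {n_t ∈ B_γ(n*) for all t ≤ k}, satisfies E[F̂_k(j) | ℱ_k] = F̄(n_k)(j) and E[F̂_k(j)² | ℱ_k] ≤ (F̄(n_k)(j))² for every j. Then for every J ≥ 1, P(n_j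 ∉ B_γ(n*) for some j ∈ {1,…,J}) ≤ ‖n_0 − n*‖_w² / γ². -/
/-!
Put `X k = ‖n_k − n*‖_w²`. Expanding the square coordinatewise, unbiasedness and the second-moment
bound give `E[X (k+1) | ℱ_k] ≤ ‖G(n_k) − n*‖_w² ≤ X k` as long as the iterates have stayed in the
ball, so `X` is a nonnegative supermartingale until it first exceeds `γ²`. For such a process,
`γ² · P(X has exceeded γ² by time J) + E[X J; not yet exceeded] ≤ E[X 0]` by induction on `J`, each
step trading the mass of the newly exited paths for their probability via Markov's inequality.
-/

open MeasureTheory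

/-- Weighted squared norm `‖x‖_w² = Σ_j w(j) x(j)²`. -/
def wnormSq {N : ℕ} (w x : Fin N → ℝ) : ℝ := ∑ j, w j * (x j) ^ 2

/-- Weighted norm `‖x‖_w = sqrt(Σ_j w(j) x(j)²)`. -/
noncomputable def wnorm {N : ℕ} (w x : Fin N → ℝ) : ℝ := Real.sqrt (wnormSq w x)

section WeightedNorm

variable {N : ℕ} {w : Fin N → ℝ}

lemma wnormSq_nonneg (hw : ∀ j, 0 ≤ w j) (x : Fin N → ℝ) : 0 ≤ wnormSq w x :=
  Finset.sum_nonneg fun j _ => mul_nonneg (hw j) (sq_nonneg _)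

lemma wnorm_nonneg (x : Fin N → ℝ) : 0 ≤ wnorm w x :=
  Real.sqrt_nonneg _

lemma wnorm_le_iff {x : Fin N → ℝ} {γ : ℝ} (hγ : 0 ≤ γ) : wnorm w x ≤ γ ↔ wnormSq w x ≤ γ ^ 2 :=
  Real.sqrt_le_left hγ

lemma lt_wnorm_iff {x : Fin N → ℝ} {γ : ℝ} (hγ : 0 ≤ γ) : γ < wnorm w x ↔ γ ^ 2 < wnormSq w x :=
  Real.lt_sqrt hγ

lemma wnorm_le_wnorm_iff (hw : ∀ j, 0 ≤ w j) {x y : Fin N → ℝ} :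
    wnorm w x ≤ wnorm w y ↔ wnormSq w x ≤ wnormSq w y :=
  Real.sqrt_le_sqrt_iff (wnormSq_nonneg hw y)

lemma continuous_wnormSq (w : Fin N → ℝ) : Continuous (wnormSq w) := by
  unfold wnormSq
  fun_prop

lemma integrable_wnormSq {Ω : Type*} [MeasurableSpace Ω] {P : Measure Ω} {x : Ω → Fin N → ℝ}
    (hx : ∀ j, MemLp (fun ω => x ω j) 2 P) : Integrable (fun ω => wnormSq w (x ω)) P :=
  integrable_finsetSum _ fun j _ => (hx j).integrable_sq.const_mul (w j)

end WeightedNorm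

section StayBelow

variable {Ω : Type*} {X : ℕ → Ω → ℝ} {r : ℝ} {k : ℕ} {ω : Ω}

def stayBelow (X : ℕ → Ω → ℝ) (r : ℝ) (k : ℕ) : Set Ω := {ω | ∀ t ≤ k, X t ω ≤ r}

lemma stayBelow_succ_subset : stayBelow X r (k + 1) ⊆ stayBelow X r k :=
  fun _ h t ht => h t (ht.trans k.le_succ)

lemma compl_stayBelow : (stayBelow X r k)ᶜ = {ω | ∃ j ≤ k, r < X j ω} := by
  ext ω
  simp [stayBelow]

lemma lt_of_notMem_stayBelow_zero (h : ω ∉ stayBelow X r 0) : r < X 0 ω := by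
  rw [← Set.mem_compl_iff, compl_stayBelow] at h
  obtain ⟨t, ht, hlt⟩ := h
  rwa [Nat.le_zero.1 ht] at hlt

lemma lt_of_mem_stayBelow_sdiff (h : ω ∈ stayBelow X r k \ stayBelow X r (k + 1)) :
    r < X (k + 1) ω := by
  obtain ⟨hstay, hexit⟩ := h
  rw [← Set.mem_compl_iff, compl_stayBelow] at hexit
  obtain ⟨t, ht, hlt⟩ := hexit
  rcases Nat.le_add_one_iff.1 ht with ht | rfl
  · exact absurd (hstay t ht) hlt.not_ge
  · exact hlt

lemma measurableSet_stayBelow {m : MeasurableSpace Ω} (hX : ∀ t ≤ k, Measurable[m] (X t)) :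
    MeasurableSet[m] (stayBelow X r k) := by
  simp only [stayBelow, Set.ofPred_forall]
  exact .iInter fun t => .iInter fun ht => measurableSet_le (hX t ht) measurable_const

variable [MeasurableSpace Ω] {P : Measure Ω} [IsFiniteMeasure P]

theorem mul_measureReal_compl_stayBelow_add_setIntegral_le (hX : ∀ k, Measurable (X k))
    (hint : ∀ k, Integrable (X k) P)
    (hstep : ∀ k, ∫ ω in stayBelow X r k, X (k + 1) ω ∂P ≤ ∫ ω in stayBelow X r k, X k ω ∂P)
    (k : ℕ) :
    r * P.real (stayBelow X r k)ᶜ + ∫ ω in stayBelow X r k, X k ω ∂P ≤ ∫ ω, X 0 ω ∂P := by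
  have hS : ∀ k, MeasurableSet (stayBelow X r k) := fun k =>
    measurableSet_stayBelow fun t _ => hX t
  induction k with
  | zero =>
    have hmarkov := setIntegral_ge_of_const_le_real (hS 0).compl (measure_ne_top P _)
      (fun ω hω => (lt_of_notMem_stayBelow_zero hω).le) (hint 0).integrableOn
    linarith [integral_add_compl (hS 0) (hint 0)]
  | succ k ih =>
    have hmarkov := setIntegral_ge_of_const_le_real ((hS k).diff (hS (k + 1)))
      (measure_ne_top P _) (fun ω hω => (lt_of_mem_stayBelow_sdiff hω).le)
      (hint (k + 1)).integrableOn
    have hsplit := integral_inter_add_sdiff (hS (k + 1)) (hint (k + 1)).integrableOn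
      (s := stayBelow X r k)
    rw [Set.inter_eq_right.2 stayBelow_succ_subset] at hsplit
    rw [measureReal_sdiff stayBelow_succ_subset (hS (k + 1))] at hmarkov
    rw [measureReal_compl (hS k)] at ih
    rw [measureReal_compl (hS (k + 1))]
    linarith [hstep k]

theorem measure_exists_lt_le_ofReal_integral_div (hr : 0 < r) (hX : ∀ k, Measurable (X k))
    (hint : ∀ k, Integrable (X k) P) (hnonneg : ∀ k ω, 0 ≤ X k ω)
    (hstep : ∀ k, ∫ ω in stayBelow X r k, X (k + 1) ω ∂P ≤ ∫ ω in stayBelow X r k, X k ω ∂P)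
    (J : ℕ) :
    P {ω | ∃ j ≤ J, r < X j ω} ≤ ENNReal.ofReal ((∫ ω, X 0 ω ∂P) / r) := by
  have hbound := mul_measureReal_compl_stayBelow_add_setIntegral_le hX hint hstep J
  have hstayed : 0 ≤ ∫ ω in stayBelow X r J, X J ω ∂P :=
    setIntegral_nonneg (measurableSet_stayBelow fun t _ => hX t) fun ω _ => hnonneg J ω
  rw [compl_stayBelow] at hbound
  rw [← ofReal_measureReal]
  exact ENNReal.ofReal_le_ofReal ((le_div_iff₀' hr).2 (by linarith))

end StayBelow

section ConditionalExpectation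

variable {Ω : Type*} {m m0 : MeasurableSpace Ω} {P : Measure Ω} [IsFiniteMeasure P]

lemma setIntegral_le_setIntegral_of_condExp_le (hm : m ≤ m0)
    {f g : Ω → ℝ} (hf : Integrable f P) (hg : Integrable g P) {s : Set Ω}
    (hs : MeasurableSet[m] s) (hfg : ∀ᵐ ω ∂P, ω ∈ s → P[f|m] ω ≤ g ω) :
    ∫ ω in s, f ω ∂P ≤ ∫ ω in s, g ω ∂P := by
  rw [← setIntegral_condExp hm hf hs]
  exact setIntegral_mono_ae_restrict integrable_condExp.integrableOn hg.integrableOn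
    ((ae_restrict_iff' (hm s hs)).2 hfg)

lemma condExp_add_mul_sq_ae_eq (hm : m ≤ m0) {b F : Ω → ℝ} (a : ℝ)
    (hb : StronglyMeasurable[m] b) (hbL2 : MemLp b 2 P) (hF : MemLp F 2 P) :
    P[fun ω => (b ω + a * F ω) ^ 2|m] =ᵐ[P]
      fun ω => b ω ^ 2 + 2 * a * b ω * P[F|m] ω + a ^ 2 * P[fun ω => F ω ^ 2|m] ω := by
  have hbF : Integrable (b * F) P := hbL2.integrable_mul hF
  have hexpand : (fun ω => (b ω + a * F ω) ^ 2)
      = (fun ω => b ω ^ 2) + (2 * a) • (b * F) + a ^ 2 • fun ω => F ω ^ 2 := by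
    ext ω
    simp only [Pi.add_apply, Pi.smul_apply, Pi.mul_apply, smul_eq_mul]
    ring
  have hb2 : P[fun ω => b ω ^ 2|m] = fun ω => b ω ^ 2 :=
    condExp_of_stronglyMeasurable hm (hb.pow 2) hbL2.integrable_sq
  rw [hexpand]
  filter_upwards [condExp_add (hbL2.integrable_sq.add (hbF.smul (2 * a)))
      (hF.integrable_sq.smul (a ^ 2)) m,
    condExp_add hbL2.integrable_sq (hbF.smul (2 * a)) m,
    condExp_smul (2 * a) (b * F) m, condExp_smul (a ^ 2) (fun ω => F ω ^ 2) m,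
    condExp_mul_of_stronglyMeasurable_left hb hbF (hF.integrable one_le_two)]
    with ω h₁ h₂ h₃ h₄ h₅
  simp only [h₁, Pi.add_apply, h₂, h₃, h₄, Pi.smul_apply, h₅, Pi.mul_apply, hb2, smul_eq_mul]
  ring

lemma condExp_wnormSq_add_smul_le {N : ℕ} {w : Fin N → ℝ} (hw : ∀ j, 0 ≤ w j) (hm : m ≤ m0)
    {B F Fbar : Ω → Fin N → ℝ} (a : ℝ) (hB : StronglyMeasurable[m] B)
    (hBL2 : ∀ j, MemLp (fun ω => B ω j) 2 P) (hF : ∀ j, MemLp (fun ω => F ω j) 2 P)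
    {s : Set Ω} (hmean : ∀ j, ∀ᵐ ω ∂P, ω ∈ s → P[fun ω => F ω j|m] ω = Fbar ω j)
    (hsecond : ∀ j, ∀ᵐ ω ∂P, ω ∈ s → P[fun ω => F ω j ^ 2|m] ω ≤ Fbar ω j ^ 2) :
    ∀ᵐ ω ∂P, ω ∈ s →
      P[fun ω => wnormSq w (B ω + a • F ω)|m] ω ≤ wnormSq w (B ω + a • Fbar ω) := by
  have hBj : ∀ j, StronglyMeasurable[m] fun ω => B ω j := fun j =>
    (continuous_apply j).comp_stronglyMeasurable hB
  have hsq : ∀ j, Integrable (fun ω => (B ω j + a * F ω j) ^ 2) P := fun j =>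
    ((hBL2 j).add ((hF j).const_mul a)).integrable_sq
  have hsum : (fun ω => wnormSq w (B ω + a • F ω))
      = ∑ j, w j • fun ω => (B ω j + a * F ω j) ^ 2 := by
    ext ω
    simp [wnormSq]
  rw [hsum]
  filter_upwards [condExp_finsetSum (fun j _ => (hsq j).smul (w j)) m,
    ae_all_iff.2 fun j => condExp_smul (w j) (fun ω => (B ω j + a * F ω j) ^ 2) m,
    ae_all_iff.2 fun j => condExp_add_mul_sq_ae_eq hm a (hBj j) (hBL2 j) (hF j),
    ae_all_iff.2 hmean, ae_all_iff.2 hsecond] with ω hsum hsmul hexpand hmean hsecond hω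
  rw [hsum, Finset.sum_apply]
  refine Finset.sum_le_sum fun j _ => ?_
  rw [hsmul j, Pi.smul_apply, hexpand j, hmean j hω, smul_eq_mul]
  simp only [Pi.add_apply, Pi.smul_apply, smul_eq_mul]
  nlinarith [mul_le_mul_of_nonneg_left (hsecond j hω) (mul_nonneg (hw j) (sq_nonneg a))]

lemma condExp_wnormSq_damped_le {N : ℕ} {w : Fin N → ℝ} (hw : ∀ j, 0 ≤ w j) (hm : m ≤ m0)
    {x F : Ω → Fin N → ℝ} {Fbar : (Fin N → ℝ) → Fin N → ℝ} {z : Fin N → ℝ} (a : ℝ)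
    (hx : Measurable[m] x) (hxL2 : ∀ j, MemLp (fun ω => x ω j) 2 P)
    (hF : ∀ j, MemLp (fun ω => F ω j) 2 P) {s : Set Ω}
    (hmean : ∀ j, ∀ᵐ ω ∂P, ω ∈ s → P[fun ω => F ω j|m] ω = Fbar (x ω) j)
    (hsecond : ∀ j, ∀ᵐ ω ∂P, ω ∈ s → P[fun ω => F ω j ^ 2|m] ω ≤ Fbar (x ω) j ^ 2)
    (hcontr : ∀ ω ∈ s, wnormSq w ((1 - a) • x ω + a • Fbar (x ω) - z) ≤ wnormSq w (x ω - z)) :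
    ∀ᵐ ω ∂P, ω ∈ s →
      P[fun ω => wnormSq w ((1 - a) • x ω + a • F ω - z)|m] ω ≤ wnormSq w (x ω - z) := by
  have hB : StronglyMeasurable[m] fun ω => (1 - a) • x ω - z :=
    ((hx.const_smul (1 - a)).sub measurable_const).stronglyMeasurable
  have hBL2 : ∀ j, MemLp (fun ω => ((1 - a) • x ω - z) j) 2 P := fun j =>
    ((hxL2 j).const_mul (1 - a)).sub (memLp_const (z j))
  have hregroup : ∀ u v : Fin N → ℝ, (1 - a) • u + a • v - z = ((1 - a) • u - z) + a • v :=
    fun u v => by abel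
  simp only [hregroup]
  filter_upwards [condExp_wnormSq_add_smul_le hw hm a hB hBL2 hF hmean hsecond] with ω hω hin
  exact (hω hin).trans (hregroup _ _ ▸ hcontr ω hin)

end ConditionalExpectation

lemma memLp_coord_of_damped_recursion {Ω : Type*} [MeasurableSpace Ω] {P : Measure Ω}
    [IsFiniteMeasure P] {N : ℕ} {n Fhat : ℕ → Ω → Fin N → ℝ} {n0 : Fin N → ℝ} {a : ℝ}
    (hn0 : ∀ ω, n 0 ω = n0)
    (hF : ∀ k j, MemLp (fun ω => Fhat k ω j) 2 P)
    (hupdate : ∀ k ω, n (k + 1) ω = (1 - a) • n k ω + a • Fhat k ω) (k : ℕ) (j : Fin N) :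
    MemLp (fun ω => n k ω j) 2 P := by
  induction k with
  | zero => simpa only [hn0] using memLp_const (n0 j)
  | succ k ih =>
    simp only [hupdate, Pi.add_apply, Pi.smul_apply, smul_eq_mul]
    exact (ih.const_mul _).add ((hF k j).const_mul _)

theorem fcfp_stability_general {N : ℕ} (w : Fin N → ℝ)
    (hw : ∀ j, 0 < w j) (nstar : Fin N → ℝ) (γ : ℝ) (hγ : 0 < γ)
    (a : ℝ) (c : ℝ) (hc' : c < 1)
    (Fbar : (Fin N → ℝ) → (Fin N → ℝ))
    (hcontr : ∀ n : Fin N → ℝ, wnorm w (n - nstar) ≤ γ →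
      wnorm w (((1 - a) • n + a • Fbar n) - nstar) ≤ c * wnorm w (n - nstar))
    {Ω : Type*} {m0 : MeasurableSpace Ω} (P : Measure Ω) [IsProbabilityMeasure P]
    (ℱ : Filtration ℕ m0) (n : ℕ → Ω → Fin N → ℝ) (hadapt : Adapted ℱ n)
    (n0 : Fin N → ℝ) (hn0 : ∀ ω, n 0 ω = n0)
    (Fhat : ℕ → Ω → Fin N → ℝ)
    (hFl2 : ∀ k j, MemLp (fun ω => Fhat k ω j) 2 P)
    (hupdate : ∀ k ω, n (k + 1) ω = (1 - a) • n k ω + a • Fhat k ω)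
    (hunbiased : ∀ k j, ∀ᵐ ω ∂P, (∀ t ≤ k, wnorm w (n t ω - nstar) ≤ γ) →
      (P[fun ω => Fhat k ω j|ℱ k]) ω = Fbar (n k ω) j)
    (hsecond : ∀ k j, ∀ᵐ ω ∂P, (∀ t ≤ k, wnorm w (n t ω - nstar) ≤ γ) →
      (P[fun ω => (Fhat k ω j) ^ 2|ℱ k]) ω ≤ (Fbar (n k ω) j) ^ 2) :
    ∀ J : ℕ, 1 ≤ J →
      P {ω : Ω | ∃ j : ℕ, 1 ≤ j ∧ j ≤ J ∧ γ < wnorm w (n j ω - nstar)} ≤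
        ENNReal.ofReal (wnormSq w (n0 - nstar) / γ ^ 2) := by
  intro J _
  have hw₀ : ∀ j, 0 ≤ w j := fun j => (hw j).le
  set X : ℕ → Ω → ℝ := fun k ω => wnormSq w (n k ω - nstar)
  have hXadapt : Adapted ℱ X := fun k =>
    (continuous_wnormSq w).measurable.comp ((hadapt k).sub measurable_const)
  have hnL2 : ∀ k j, MemLp (fun ω => n k ω j) 2 P :=
    memLp_coord_of_damped_recursion hn0 hFl2 hupdate
  have hL2 : ∀ k j, MemLp (fun ω => (n k ω - nstar) j) 2 P := fun k j =>
    (hnL2 k j).sub (memLp_const (nstar j))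
  have hstep : ∀ k, ∫ ω in stayBelow X (γ ^ 2) k, X (k + 1) ω ∂P
      ≤ ∫ ω in stayBelow X (γ ^ 2) k, X k ω ∂P := by
    intro k
    refine setIntegral_le_setIntegral_of_condExp_le (ℱ.le k) (integrable_wnormSq (hL2 (k + 1)))
      (integrable_wnormSq (hL2 k)) (measurableSet_stayBelow fun t ht => hXadapt.measurable_le ht) ?_
    simp only [stayBelow, X, ← wnorm_le_iff hγ.le, hupdate]
    exact condExp_wnormSq_damped_le hw₀ (ℱ.le k) a (hadapt k) (hnL2 k) (hFl2 k) (hunbiased k)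
      (hsecond k) fun ω hin => (wnorm_le_wnorm_iff hw₀).1 <| (hcontr _ (hin k le_rfl)).trans <|
        mul_le_of_le_one_left (wnorm_nonneg _) hc'.le
  calc P {ω | ∃ j, 1 ≤ j ∧ j ≤ J ∧ γ < wnorm w (n j ω - nstar)}
      ≤ P {ω | ∃ j ≤ J, γ ^ 2 < X j ω} :=
        measure_mono fun ω ⟨j, _, hjJ, hj⟩ => ⟨j, hjJ, (lt_wnorm_iff hγ.le).1 hj⟩
    _ ≤ ENNReal.ofReal ((∫ ω, X 0 ω ∂P) / γ ^ 2) :=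
        measure_exists_lt_le_ofReal_integral_div (by positivity) (fun k => hXadapt.measurable)
          (fun k => integrable_wnormSq (hL2 k)) (fun k ω => wnormSq_nonneg hw₀ _) hstep J
    _ = ENNReal.ofReal (wnormSq w (n0 - nstar) / γ ^ 2) := by simp [X, hn0]

/-- Convergence of the (noisy) full coordinate fixed-point iteration: if the damped map
`G(n) = (1−a) n + a F̄(n)` is a `c`-contraction towards `n*` on `B_γ(n*)` and the iterates
`n_{k+1} = (1−a) n_k + a F̂_k` use conditionally unbiased estimates with
`E[F̂_k(j)²|ℱ_k] ≤ F̄(n_k)(j)²` on the event that all iterates so far stayed in the ball,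
then the probability that some iterate `n_j`, `1 ≤ j ≤ J`, leaves the ball is at most `‖n_0 − n*‖_w²/γ²`. -/
theorem fcfp_stability {N : ℕ} (hN : 1 ≤ N) (w : Fin N → ℝ)
    (hw : ∀ j, 0 < w j) (nstar : Fin N → ℝ) (γ : ℝ) (hγ : 0 < γ)
    (a : ℝ) (ha : 0 < a) (ha' : a ≤ 1) (c : ℝ) (hc : 0 < c) (hc' : c < 1)
    (Fbar : (Fin N → ℝ) → (Fin N → ℝ))
    (hcontr : ∀ n : Fin N → ℝ, wnorm w (n - nstar) ≤ γ →
      wnorm w (((1 - a) • n + a • Fbar n) - nstar) ≤ c * wnorm w (n - nstar))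
    {Ω : Type*} {m0 : MeasurableSpace Ω} (P : Measure Ω) [IsProbabilityMeasure P]
    (ℱ : Filtration ℕ m0) (n : ℕ → Ω → Fin N → ℝ) (hadapt : Adapted ℱ n)
    (n0 : Fin N → ℝ) (hn0 : ∀ ω, n 0 ω = n0) (hball0 : wnorm w (n0 - nstar) ≤ γ)
    (Fhat : ℕ → Ω → Fin N → ℝ)
    (hFmeas : ∀ k, StronglyMeasurable[ℱ (k + 1)] (Fhat k))
    (hFl2 : ∀ k j, MemLp (fun ω => Fhat k ω j) 2 P)
    (hupdate : ∀ k ω, n (k + 1) ω = (1 - a) • n k ω + a • Fhat k ω)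
    (hunbiased : ∀ k j, ∀ᵐ ω ∂P, (∀ t ≤ k, wnorm w (n t ω - nstar) ≤ γ) →
      (P[fun ω => Fhat k ω j|ℱ k]) ω = Fbar (n k ω) j)
    (hsecond : ∀ k j, ∀ᵐ ω ∂P, (∀ t ≤ k, wnorm w (n t ω - nstar) ≤ γ) →
      (P[fun ω => (Fhat k ω j) ^ 2|ℱ k]) ω ≤ (Fbar (n k ω) j) ^ 2) :
    ∀ J : ℕ, 1 ≤ J →
      P {ω : Ω | ∃ j : ℕ, 1 ≤ j ∧ j ≤ J ∧ γ < wnorm w (n j ω - nstar)} ≤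
        ENNReal.ofReal (wnormSq w (n0 - nstar) / γ ^ 2) :=
  fcfp_stability_general w hw nstar γ hγ a c hc' Fbar hcontr P ℱ n hadapt n0 hn0 Fhat hFl2 hupdate
    hunbiased hsecond
end
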